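/- Let W be a symmetric real n×n matrix (n ≥ 2) with nonnegative entries whose associated graph is connected, let L = D − W be the graph Laplacian, and let 𝓘 be a nonempty subset of {1,…,n} with nonempty complement 𝒦. Let c be a positive integer and let f_𝓘 be a real |𝓘|×c matrix of prescribed values on 𝓘. Then there exists a unique real n×c matrix u satisfying (Lu)_i = 0 for every i ∈ 𝒦 and u_i = f_i for every i ∈ 𝓘, and its restriction to 𝒦 is given by u_𝒦 = L_𝒦⁻¹ W_{𝒦,𝓘} f_𝓘, where L_𝒦 is the principal submatrix of L indexed by 𝒦 and W_{𝒦,𝓘} is the submatrix of W with rows indexed by 𝒦 and columns indexed by 𝓘. -/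
import Mathlib


open Matrix

private lemma path_const_aux {n : ℕ} (y : Fin n → ℝ) (W : Matrix (Fin n) (Fin n) ℝ)
    (hzero : ∀ i j, 0 < W i j → y i = y j)
    (r : ℕ) (k : ℕ → Fin n) (hpos : ∀ t < r, 0 < W (k t) (k (t + 1))) :
    y (k 0) = y (k r) := by
  induction r with
  | zero => rfl
  | succ r ih =>
    have h1 : y (k 0) = y (k r) := ih (fun t ht => hpos t (Nat.lt_succ_of_lt ht))
    rw [h1]
    exact hzero _ _ (hpos r (Nat.lt_succ_self r))

/-- Dirichlet-type interface problem: there is a unique `u` with `(Lu)_i = 0`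
off `𝓘` and `u_i = f_i` on `𝓘`, and its restriction to `𝒦` is
`u_𝒦 = L_𝒦⁻¹ W_{𝒦,𝓘} f_𝓘`. -/
theorem stmt_13 (n c : ℕ) (hn : 2 ≤ n) (hc : 0 < c)
    (W : Matrix (Fin n) (Fin n) ℝ) (hWsymm : Wᵀ = W) (hWnn : ∀ i j, 0 ≤ W i j)
    (hconn : ∀ i j : Fin n, i ≠ j → ∃ (r : ℕ) (k : ℕ → Fin n),
      k 0 = i ∧ k r = j ∧ ∀ t < r, 0 < W (k t) (k (t + 1)))
    (d : Fin n → ℝ) (hd : d = fun i => ∑ j, W i j)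
    (L : Matrix (Fin n) (Fin n) ℝ) (hL : L = Matrix.diagonal d - W)
    (I : Finset (Fin n)) (hI : I.Nonempty) (hK : ∃ i, i ∉ I)
    (fI : Matrix {i : Fin n // i ∈ I} (Fin c) ℝ)
    (LK : Matrix {i : Fin n // i ∉ I} {i : Fin n // i ∉ I} ℝ)
    (hLK : LK = Matrix.of fun k k' => L k.val k'.val)
    (WKI : Matrix {i : Fin n // i ∉ I} {i : Fin n // i ∈ I} ℝ)
    (hWKI : WKI = Matrix.of fun k j => W k.val j.val) :
    (∃! u : Matrix (Fin n) (Fin c) ℝ,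
      (∀ i, i ∉ I → ∀ j, (L * u) i j = 0) ∧
      (∀ i, ∀ h : i ∈ I, ∀ j, u i j = fI ⟨i, h⟩ j)) ∧
    (∀ u : Matrix (Fin n) (Fin c) ℝ,
      ((∀ i, i ∉ I → ∀ j, (L * u) i j = 0) ∧
       (∀ i, ∀ h : i ∈ I, ∀ j, u i j = fI ⟨i, h⟩ j)) →
      Matrix.of (fun (k : {i : Fin n // i ∉ I}) j => u k.val j) = LK⁻¹ * WKI * fI) := by
  obtain ⟨i0, hi0⟩ := hI
  have hsym : ∀ i j, W i j = W j i := fun i j => by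
    conv_lhs => rw [← hWsymm]
    exact Matrix.transpose_apply W i j
  have hLentry : ∀ i j, L i j = (if i = j then d i else 0) - W i j := by
    intro i j
    rw [hL]
    simp [Matrix.diagonal_apply]
  -- LK is invertible
  have hdetLK : IsUnit LK.det := by
    rw [isUnit_iff_ne_zero]
    intro hdet
    obtain ⟨x, hx0, hxL⟩ := Matrix.exists_mulVec_eq_zero_iff.mpr hdet
    set y : Fin n → ℝ := fun i => if h : i ∈ I then 0 else x ⟨i, h⟩ with hy
    have hyI : ∀ i, i ∈ I → y i = 0 := fun i h => dif_pos h
    have hyK : ∀ i (h : i ∉ I), y i = x ⟨i, h⟩ := fun i h => dif_neg h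
    -- rows of L applied to y vanish off I
    have hrow : ∀ i, i ∉ I → ∑ j, L i j * y j = 0 := by
      intro i hi
      have hv : LK.mulVec x ⟨i, hi⟩ = 0 := by rw [hxL]; rfl
      rw [Matrix.mulVec, dotProduct] at hv
      have e0 : ∑ j ∈ Iᶜ, L i j * y j = ∑ j, L i j * y j :=
        Finset.sum_subset (Finset.subset_univ _) (by
          intro j _ hj
          rw [Finset.mem_compl, not_not] at hj
          rw [hyI j hj, mul_zero])
      have e1 : ∑ j ∈ Iᶜ, L i j * y j = ∑ j : {i : Fin n // i ∉ I}, L i j.val * y j.val :=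
        Finset.sum_subtype Iᶜ (fun x => Finset.mem_compl) _
      rw [← e0, e1]
      rw [← hv]
      refine Finset.sum_congr rfl fun j _ => ?_
      rw [hLK, hyK j.val j.prop]
      rfl
    -- the quadratic form vanishes
    have hQ0 : ∑ i, y i * (∑ j, L i j * y j) = 0 := by
      refine Finset.sum_eq_zero fun i _ => ?_
      by_cases hi : i ∈ I
      · rw [hyI i hi, zero_mul]
      · rw [hrow i hi, mul_zero]
    have hrowexp : ∀ i, ∑ j, L i j * y j = d i * y i - ∑ j, W i j * y j := by
      intro i
      have h1 : ∀ j, L i j * y j = (if i = j then d i * y j else 0) - W i j * y j := by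
        intro j
        rw [hLentry]
        by_cases hij : i = j
        · simp only [if_pos hij]; ring
        · simp only [if_neg hij]; ring
      simp_rw [h1]
      rw [Finset.sum_sub_distrib, Finset.sum_ite_eq]
      simp
    have hAC : (∑ i, ∑ j, W i j * y i * y i) - (∑ i, ∑ j, W i j * y i * y j) = 0 := by
      rw [← hQ0]
      rw [← Finset.sum_sub_distrib]
      refine (Finset.sum_congr rfl fun i _ => ?_).symm
      have e1 : ∑ j, W i j * y i * y i = d i * y i * y i := by
        simp_rw [mul_assoc]
        rw [← Finset.sum_mul]
        simp only [hd]
      have e2 : y i * (∑ j, W i j * y j) = ∑ j, W i j * y i * y j := by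
        rw [Finset.mul_sum]
        exact Finset.sum_congr rfl fun j _ => by ring
      rw [hrowexp, mul_sub, e2, e1]
      ring
    have hB : (∑ i, ∑ j, W i j * y j * y j) = ∑ i, ∑ j, W i j * y i * y i := by
      rw [Finset.sum_comm]
      exact Finset.sum_congr rfl fun i _ =>
        Finset.sum_congr rfl fun j _ => by rw [hsym j i]
    have hQ : ∑ i, ∑ j, W i j * (y i - y j) ^ 2 = 0 := by
      calc ∑ i, ∑ j, W i j * (y i - y j) ^ 2
          = (∑ i, ∑ j, (W i j * y i * y i + W i j * y j * y j))
            - ∑ i, ∑ j, (2 * (W i j * y i * y j)) := by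
            rw [← Finset.sum_sub_distrib]
            refine Finset.sum_congr rfl fun i _ => ?_
            rw [← Finset.sum_sub_distrib]
            exact Finset.sum_congr rfl fun j _ => by ring
        _ = 0 := by
            have ha : ∑ i, ∑ j, (W i j * y i * y i + W i j * y j * y j)
                = (∑ i, ∑ j, W i j * y i * y i) + ∑ i, ∑ j, W i j * y j * y j := by
              rw [← Finset.sum_add_distrib]
              exact Finset.sum_congr rfl fun i _ => by rw [← Finset.sum_add_distrib]
            have hb : ∑ i, ∑ j, (2 * (W i j * y i * y j))
                = 2 * ∑ i, ∑ j, W i j * y i * y j := by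
              rw [Finset.mul_sum]
              exact Finset.sum_congr rfl fun i _ => by rw [Finset.mul_sum]
            rw [ha, hb, hB]
            linarith [hAC]
    have hterm : ∀ i j : Fin n, W i j * (y i - y j) ^ 2 = 0 := by
      have h1 := (Finset.sum_eq_zero_iff_of_nonneg (fun i _ =>
        Finset.sum_nonneg fun j _ => mul_nonneg (hWnn i j) (sq_nonneg _))).mp hQ
      intro i j
      exact (Finset.sum_eq_zero_iff_of_nonneg (fun j _ =>
        mul_nonneg (hWnn i j) (sq_nonneg _))).mp (h1 i (Finset.mem_univ i)) j (Finset.mem_univ j)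
    have hconst : ∀ i j, 0 < W i j → y i = y j := by
      intro i j hw
      have h2 : (y i - y j) ^ 2 = 0 := by
        rcases mul_eq_zero.mp (hterm i j) with h | h
        · exact absurd h (ne_of_gt hw)
        · exact h
      exact sub_eq_zero.mp (sq_eq_zero_iff.mp h2)
    have hy0 : ∀ i, y i = 0 := by
      intro i
      by_cases hi : i ∈ I
      · exact hyI i hi
      · have hne : i ≠ i0 := fun h => hi (by rw [h]; exact hi0)
        obtain ⟨r, k, hk0, hkr, hkpos⟩ := hconn i i0 hne
        have hp := path_const_aux y W hconst r k hkpos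
        rw [hk0, hkr] at hp
        rw [hp]
        exact hyI i0 hi0
    apply hx0
    funext k
    have hk := hy0 k.val
    rw [hyK k.val k.prop] at hk
    exact hk
  -- off-diagonal entries of L on I columns
  have hLW : ∀ (i : Fin n), i ∉ I → ∀ (k : Fin n), k ∈ I → L i k = -W i k := by
    intro i hi k hk
    rw [hLentry, if_neg (fun h => hi (by rw [h]; exact hk))]
    ring
  -- key row decomposition
  have hdecomp : ∀ (u : Matrix (Fin n) (Fin c) ℝ),
      (∀ i, ∀ h : i ∈ I, ∀ j, u i j = fI ⟨i, h⟩ j) →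
      ∀ (i : Fin n) (hi : i ∉ I) (j : Fin c),
      (L * u) i j =
        (LK * Matrix.of (fun (k : {i : Fin n // i ∉ I}) j => u k.val j)) ⟨i, hi⟩ j
          - (WKI * fI) ⟨i, hi⟩ j := by
    intro u hu i hi j
    rw [Matrix.mul_apply]
    have hsplit : (∑ k ∈ I, L i k * u k j) + ∑ k ∈ Iᶜ, L i k * u k j
        = ∑ k, L i k * u k j := Finset.sum_add_sum_compl I _
    rw [← hsplit]
    have e1' : (WKI * fI) ⟨i, hi⟩ j = ∑ k : {i : Fin n // i ∈ I}, W i k.val * fI k j := by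
      rw [Matrix.mul_apply]
      exact Finset.sum_congr rfl fun k _ => by rw [hWKI]; rfl
    have e1 : ∑ k ∈ I, L i k * u k j = -∑ k : {i : Fin n // i ∈ I}, W i k.val * fI k j := by
      rw [← Finset.sum_neg_distrib]
      rw [Finset.sum_subtype I (fun x => Iff.rfl) fun k => L i k * u k j]
      refine Finset.sum_congr rfl fun k _ => ?_
      rw [hu k.val k.prop j, hLW i hi k.val k.prop]
      ring
    have e2 : ∑ k ∈ Iᶜ, L i k * u k j
        = (LK * Matrix.of (fun (k : {i : Fin n // i ∉ I}) j => u k.val j)) ⟨i, hi⟩ j := by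
      rw [Matrix.mul_apply]
      rw [Finset.sum_subtype Iᶜ (fun x => Finset.mem_compl) fun k => L i k * u k j]
      refine Finset.sum_congr rfl fun k _ => ?_
      rw [hLK]
      rfl
    rw [e1, e2, ← e1']
    ring
  -- the candidate solution
  set v : Matrix {i : Fin n // i ∉ I} (Fin c) ℝ := LK⁻¹ * WKI * fI with hv
  set u₀ : Matrix (Fin n) (Fin c) ℝ :=
    Matrix.of (fun i j => if h : i ∈ I then fI ⟨i, h⟩ j else v ⟨i, h⟩ j) with hu₀
  have hu₀I : ∀ i, ∀ h : i ∈ I, ∀ j, u₀ i j = fI ⟨i, h⟩ j := fun i h j => dif_pos h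
  have hu₀K : Matrix.of (fun (k : {i : Fin n // i ∉ I}) j => u₀ k.val j) = v := by
    ext k j
    exact dif_neg k.prop
  have hLKv : LK * v = WKI * fI := by
    rw [hv, ← Matrix.mul_assoc, ← Matrix.mul_assoc,
      Matrix.mul_nonsing_inv _ hdetLK, Matrix.one_mul]
  have hsol : ∀ i, i ∉ I → ∀ j, (L * u₀) i j = 0 := by
    intro i hi j
    rw [hdecomp u₀ hu₀I i hi j, hu₀K, hLKv, sub_self]
  -- the formula for any solution
  have hform : ∀ u : Matrix (Fin n) (Fin c) ℝ,
      ((∀ i, i ∉ I → ∀ j, (L * u) i j = 0) ∧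
       (∀ i, ∀ h : i ∈ I, ∀ j, u i j = fI ⟨i, h⟩ j)) →
      Matrix.of (fun (k : {i : Fin n // i ∉ I}) j => u k.val j) = LK⁻¹ * WKI * fI := by
    rintro u ⟨h1, h2⟩
    set uK := Matrix.of (fun (k : {i : Fin n // i ∉ I}) j => u k.val j) with huK
    have hLKuK : LK * uK = WKI * fI := by
      ext k j
      have hdec : (0 : ℝ) = (LK * uK) k j - (WKI * fI) k j := by
        rw [← h1 k.val k.prop j]
        exact hdecomp u h2 k.val k.prop j
      linarith [hdec]
    calc uK = 1 * uK := (Matrix.one_mul _).symm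
      _ = (LK⁻¹ * LK) * uK := by rw [Matrix.nonsing_inv_mul _ hdetLK]
      _ = LK⁻¹ * (LK * uK) := Matrix.mul_assoc _ _ _
      _ = LK⁻¹ * (WKI * fI) := by rw [hLKuK]
      _ = LK⁻¹ * WKI * fI := (Matrix.mul_assoc _ _ _).symm
  refine ⟨⟨u₀, ⟨hsol, hu₀I⟩, ?_⟩, hform⟩
  intro u hu
  have h3 := hform u hu
  have h4 := hform u₀ ⟨hsol, hu₀I⟩
  ext i j
  by_cases hi : i ∈ I
  · rw [hu.2 i hi j, hu₀I i hi j]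
  · exact congrFun (congrFun (h3.trans h4.symm) ⟨i, hi⟩) j
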